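/- Let R be a reduced crystallographic root system in a finite-dimensional real inner product space E, and let Σ ⊆ R be a Π-system: a linearly independent subset such that α − β ∉ R for all α, β ∈ Σ. Then ⟨α, β⟩ ≤ 0 for all distinct α, β ∈ Σ, and Σ is a base of the root system R(Σ) ⊆ R consisting of all images of elements of Σ under the group generated by the reflections s_β for β ∈ Σ: R(Σ) is a reduced crystallographic root system in the span of Σ, and every element of R(Σ) is an integer linear combination of elements of Σ with coefficients all nonnegative or all nonpositive. -/

import Mathlib

open scoped RealInnerProductSpace

/-- A reduced crystallographic root system in a real inner product space `E`:
a finite set of nonzero vectors, with integral Cartan numbers, closed under the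
reflections it defines, and such that the only multiples of a root `α` that are
roots are `±α`. -/
def IsRootSystem {E : Type*} [NormedAddCommGroup E] [InnerProductSpace ℝ E]
    (R : Set E) : Prop :=
  R.Finite ∧ (0 : E) ∉ R ∧
  (∀ α ∈ R, ∀ β ∈ R, ∃ n : ℤ, 2 * ⟪β, α⟫ / ⟪α, α⟫ = (n : ℝ)) ∧
  (∀ α ∈ R, ∀ β ∈ R, β - (2 * ⟪β, α⟫ / ⟪α, α⟫) • α ∈ R) ∧
  (∀ α ∈ R, ∀ t : ℝ, t • α ∈ R → t = 1 ∨ t = -1)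

/-- `S` is a base (simple system) of the root system `R`: a linearly independent
subset such that every root is an integer linear combination of elements of `S`
with coefficients all nonnegative or all nonpositive. -/
def IsBase {E : Type*} [NormedAddCommGroup E] [InnerProductSpace ℝ E]
    (R S : Set E) : Prop :=
  S ⊆ R ∧ LinearIndependent ℝ ((↑) : S → E) ∧
  ∀ β ∈ R, ∃ c : E →₀ ℤ, ↑c.support ⊆ S ∧
    β = c.sum (fun α n => (n : ℝ) • α) ∧
    ((∀ α, 0 ≤ c α) ∨ (∀ α, c α ≤ 0))

/-- The reflection `s_β : x ↦ x - (2⟪x,β⟫/⟪β,β⟫) β` in the hyperplane orthogonal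
to `β`, as an element of the monoid `Function.End E` of self-maps of `E`. -/
noncomputable def sRefl {E : Type*} [NormedAddCommGroup E] [InnerProductSpace ℝ E]
    (β : E) : Function.End E :=
  fun x => x - (2 * ⟪x, β⟫ / ⟪β, β⟫) • β

/-- The set of all images of elements of `Sg` under the group generated by the
reflections `s_β`, `β ∈ Sg` (since each reflection is an involution, this group
coincides with the generated monoid of self-maps). -/
noncomputable def subSystem {E : Type*} [NormedAddCommGroup E] [InnerProductSpace ℝ E]
    (Sg : Set E) : Set E :=
  {x | ∃ w ∈ Submonoid.closure (sRefl '' Sg), ∃ α ∈ Sg, x = w α}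

/-- `β` is an integer linear combination of elements of `S'` with all
coefficients nonnegative. -/
def IsNonnegCombo {E : Type*} [NormedAddCommGroup E] [InnerProductSpace ℝ E]
    (S' : Set E) (β : E) : Prop :=
  ∃ c : E →₀ ℤ, ↑c.support ⊆ S' ∧ β = c.sum (fun α n => (n : ℝ) • α) ∧ ∀ α, 0 ≤ c α

/-- The inverse root `α* = 2α/⟪α,α⟫`. -/
noncomputable def invRoot {E : Type*} [NormedAddCommGroup E] [InnerProductSpace ℝ E]
    (α : E) : E :=
  (2 / ⟪α, α⟫) • α
/-- A Π-system of the root system `R`: a linearly independent subset `Sg ⊆ R`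
such that `α - β` is not a root for all `α, β ∈ Sg`. -/
def IsPiSys {E : Type*} [NormedAddCommGroup E] [InnerProductSpace ℝ E]
    (R Sg : Set E) : Prop :=
  Sg ⊆ R ∧ LinearIndependent ℝ ((↑) : Sg → E) ∧ ∀ α ∈ Sg, ∀ β ∈ Sg, α - β ∉ R

/-!
If `⟪x, β⟫ > 0` for roots `x ≠ β`, the two Cartan numbers are positive integers with product
`< 4` (strict Cauchy–Schwarz), so one of them is `1` and `x - β` is a root; for `x, β ∈ Σ` this
is excluded, whence `⟪x, β⟫ ≤ 0`. Each `s_β`, `β ∈ Σ`, maps `R` to itself and changes integer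
coordinates with respect to `Σ` by an integer multiple of `β`, so `R(Σ) ⊆ R ∩ ℤΣ`; and `R(Σ)` is
stable under its own reflections because `s_{s_β v} = s_β s_v s_β`.

For sign coherence, induct on `∑ |cₐ|` for a root `x = ∑ cₐ a`. If the signs were mixed, there
would be `α` with `cα > 0`, `⟪x, α⟫ > 0` and `β` with `cβ < 0`, `⟪x, β⟫ < 0`. Then `x - α` and
`x + β` are roots with smaller coefficient sum, and their coherence forces `c = e_α - e_β`, i.e.
`x = α - β ∈ R`, contradicting the Π-system condition.
-/

open Finsupp

section RootSystem

variable {E : Type*} [NormedAddCommGroup E] [InnerProductSpace ℝ E] {R : Set E} {x β : E}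

namespace IsRootSystem

lemma ne_zero (hR : IsRootSystem R) (hx : x ∈ R) : x ≠ 0 :=
  fun h => hR.2.1 (h ▸ hx)

lemma inner_self_pos (hR : IsRootSystem R) (hx : x ∈ R) : 0 < ⟪x, x⟫ :=
  real_inner_self_pos.2 (hR.ne_zero hx)

lemma neg_mem (hR : IsRootSystem R) (hx : x ∈ R) : -x ∈ R := by
  have h := hR.2.2.2.1 x hx x hx
  rwa [mul_div_assoc, div_self (hR.inner_self_pos hx).ne', mul_one, two_smul,
    sub_add_cancel_left] at h

/-- Strict Cauchy–Schwarz: by reducedness, `x ≠ β` is not a positive multiple of `β`. -/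
lemma inner_sq_lt (hR : IsRootSystem R) (hx : x ∈ R) (hβ : β ∈ R) (hpos : 0 < ⟪x, β⟫)
    (hne : x ≠ β) : ⟪x, β⟫ ^ 2 < ⟪x, x⟫ * ⟪β, β⟫ := by
  have hβ0 : ‖β‖ ≠ 0 := norm_ne_zero_iff.2 (hR.ne_zero hβ)
  have hlt : ⟪x, β⟫ < ‖x‖ * ‖β‖ := by
    refine inner_lt_norm_mul_iff_real.2 fun h => hne ?_
    have hxt : x = (‖x‖ / ‖β‖) • β := by
      rw [div_eq_inv_mul, mul_smul, ← h, inv_smul_smul₀ hβ0]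
    rcases hR.2.2.2.2 β hβ _ (hxt ▸ hx) with h1 | h1
    · rw [hxt, h1, one_smul]
    · have : (0 : ℝ) ≤ ‖x‖ / ‖β‖ := by positivity
      linarith
  rw [real_inner_self_eq_norm_sq, real_inner_self_eq_norm_sq, ← mul_pow]
  exact pow_lt_pow_left₀ hlt hpos.le two_ne_zero

lemma sub_mem_of_inner_pos (hR : IsRootSystem R) (hx : x ∈ R) (hβ : β ∈ R)
    (hpos : 0 < ⟪x, β⟫) (hne : x ≠ β) : x - β ∈ R := by
  obtain ⟨m, hm⟩ := hR.2.2.1 β hβ x hx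
  obtain ⟨n, hn⟩ := hR.2.2.1 x hx β hβ
  have hX := hR.inner_self_pos hx
  have hB := hR.inner_self_pos hβ
  rw [real_inner_comm] at hn
  have hm0 : (0 : ℝ) < m := hm ▸ by positivity
  have hn0 : (0 : ℝ) < n := hn ▸ by positivity
  have hmn : (m : ℝ) * n < 4 := by
    rw [← hm, ← hn, div_mul_div_comm, div_lt_iff₀ (by positivity)]
    nlinarith [hR.inner_sq_lt hx hβ hpos hne]
  have hmn' : m * n < 4 := by exact_mod_cast hmn
  have hm0' : 0 < m := by exact_mod_cast hm0
  have hn0' : 0 < n := by exact_mod_cast hn0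
  obtain rfl | rfl : m = 1 ∨ n = 1 := by
    by_contra! h
    have : 2 ≤ m := by omega
    have : 2 ≤ n := by omega
    nlinarith
  · have h := hR.2.2.2.1 β hβ x hx
    rwa [hm, Int.cast_one, one_smul] at h
  · have h := hR.neg_mem (hR.2.2.2.1 x hx β hβ)
    rwa [real_inner_comm, hn, Int.cast_one, one_smul, neg_sub] at h

end IsRootSystem

lemma IsPiSys.inner_nonpos {Sg : Set E} (hR : IsRootSystem R) (hSg : IsPiSys R Sg) :
    ∀ α ∈ Sg, ∀ β ∈ Sg, α ≠ β → ⟪α, β⟫ ≤ 0 := by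
  intro α hα β hβ hne
  by_contra! hpos
  exact hSg.2.2 α hα β hβ (hR.sub_mem_of_inner_pos (hSg.1 hα) (hSg.1 hβ) hpos hne)

end RootSystem

section Reflection

variable {E : Type*} [NormedAddCommGroup E] [InnerProductSpace ℝ E]

lemma sRefl_apply (β x : E) : sRefl β x = x - (2 * ⟪x, β⟫ / ⟪β, β⟫) • β := rfl

lemma inner_sRefl_sRefl (β x y : E) : ⟪sRefl β x, sRefl β y⟫ = ⟪x, y⟫ := by
  rcases eq_or_ne β 0 with rfl | hβ
  · simp [sRefl_apply]
  · have hB : ⟪β, β⟫ ≠ 0 := (real_inner_self_pos.2 hβ).ne'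
    simp only [sRefl_apply, inner_sub_left, inner_sub_right, real_inner_smul_left,
      real_inner_smul_right, real_inner_comm y β]
    field_simp
    ring

lemma sRefl_sRefl (β x : E) : sRefl β (sRefl β x) = x := by
  rcases eq_or_ne β 0 with rfl | hβ
  · simp [sRefl_apply]
  · have hB : ⟪β, β⟫ ≠ 0 := (real_inner_self_pos.2 hβ).ne'
    have h : ⟪sRefl β x, β⟫ = -⟪x, β⟫ := by
      rw [sRefl_apply, inner_sub_left, real_inner_smul_left]
      field_simp
      ring
    rw [sRefl_apply β (sRefl β x), h, sRefl_apply]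
    match_scalars <;> ring

lemma sRefl_sub_smul (β x y : E) (t : ℝ) :
    sRefl β (x - t • y) = sRefl β x - t • sRefl β y := by
  simp only [sRefl_apply, inner_sub_left, real_inner_smul_left]
  match_scalars <;> ring

lemma sRefl_sRefl_apply_eq (β v y : E) :
    sRefl (sRefl β v) y = sRefl β (sRefl v (sRefl β y)) := by
  rw [sRefl_apply v, sRefl_sub_smul, sRefl_sRefl, sRefl_apply, inner_sRefl_sRefl,
    ← inner_sRefl_sRefl β y, sRefl_sRefl]

end Reflection

section SubSystem

variable {E : Type*} [NormedAddCommGroup E] [InnerProductSpace ℝ E] {R Sg : Set E}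

lemma subset_subSystem (Sg : Set E) : Sg ⊆ subSystem Sg :=
  fun α hα => ⟨1, one_mem _, α, hα, rfl⟩

lemma sRefl_mem_subSystem {β y : E} (hβ : β ∈ Sg) (hy : y ∈ subSystem Sg) :
    sRefl β y ∈ subSystem Sg := by
  obtain ⟨w, hw, α, hα, rfl⟩ := hy
  exact ⟨sRefl β * w, mul_mem (Submonoid.subset_closure ⟨β, hβ, rfl⟩) hw, α, hα, rfl⟩

lemma subSystem_subset {S : Set E} (hS : Sg ⊆ S) (h : ∀ β ∈ Sg, ∀ y ∈ S, sRefl β y ∈ S) :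
    subSystem Sg ⊆ S := by
  rintro _ ⟨w, hw, α, hα, rfl⟩
  induction hw using Submonoid.closure_induction_left with
  | one => exact hS hα
  | mul_left f hf w _ ih =>
    obtain ⟨β, hβ, rfl⟩ := hf
    exact h β hβ _ ih

lemma sRefl_mem_subSystem_of_mem {u y : E} (hu : u ∈ subSystem Sg) (hy : y ∈ subSystem Sg) :
    sRefl u y ∈ subSystem Sg := by
  refine subSystem_subset (S := {u | ∀ y ∈ subSystem Sg, sRefl u y ∈ subSystem Sg})
    (fun α hα y hy => sRefl_mem_subSystem hα hy) ?_ hu y hy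
  intro β hβ u hu y hy
  rw [sRefl_sRefl_apply_eq]
  exact sRefl_mem_subSystem hβ (hu _ (sRefl_mem_subSystem hβ hy))

lemma IsRootSystem.subSystem_subset_inter_span (hR : IsRootSystem R) (hSg : Sg ⊆ R) :
    subSystem Sg ⊆ R ∩ Submodule.span ℤ Sg := by
  refine subSystem_subset (fun α hα => ⟨hSg hα, Submodule.subset_span hα⟩) ?_
  rintro β hβ y ⟨hyR, hyS⟩
  obtain ⟨n, hn⟩ := hR.2.2.1 β (hSg hβ) y hyR
  refine ⟨hR.2.2.2.1 β (hSg hβ) y hyR, ?_⟩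
  rw [sRefl_apply, hn, Int.cast_smul_eq_zsmul]
  exact sub_mem hyS (Submodule.smul_mem _ n (Submodule.subset_span hβ))

lemma isRootSystem_subSystem (hR : IsRootSystem R) (hSg : Sg ⊆ R) :
    IsRootSystem (subSystem Sg) := by
  have hsub : subSystem Sg ⊆ R := fun x hx => (hR.subSystem_subset_inter_span hSg hx).1
  exact ⟨hR.1.subset hsub, fun h => hR.2.1 (hsub h),
    fun u hu v hv => hR.2.2.1 u (hsub hu) v (hsub hv),
    fun u hu v hv => sRefl_mem_subSystem_of_mem hu hv,
    fun u hu t ht => hR.2.2.2.2 u (hsub hu) t (hsub ht)⟩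

end SubSystem

section Coefficients

variable {E : Type*} [NormedAddCommGroup E] [InnerProductSpace ℝ E]

lemma Finsupp.sum_natAbs_neg {ι : Type*} (c : ι →₀ ℤ) :
    ((-c).sum fun _ n => n.natAbs) = c.sum fun _ n => n.natAbs := by
  simp [Finsupp.sum_neg_index]

lemma Finsupp.sum_natAbs_sub_single_lt {ι : Type*} [DecidableEq ι] {c : ι →₀ ℤ} {a : ι}
    (ha : 0 < c a) :
    ((c - single a 1).sum fun _ n => n.natAbs) < c.sum fun _ n => n.natAbs := by
  have hsub : (c - single a 1).support ⊆ insert a c.support := by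
    refine Finsupp.support_sub.trans (Finset.union_subset (Finset.subset_insert _ _) ?_)
    exact Finsupp.support_single_subset.trans (by simp)
  rw [Finsupp.sum_of_support_subset _ hsub _ (by simp),
    Finsupp.sum_of_support_subset _ (Finset.subset_insert a _) _ (by simp)]
  refine Finset.sum_lt_sum (fun i _ => ?_) ⟨a, Finset.mem_insert_self _ _, ?_⟩
  · rcases eq_or_ne i a with rfl | hi
    · simp only [Finsupp.coe_sub, Pi.sub_apply, single_eq_same]
      omega
    · simp [Finsupp.single_eq_of_ne hi]
  · simp only [Finsupp.coe_sub, Pi.sub_apply, single_eq_same]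
    omega

lemma real_inner_linearCombination_int (y : E) (d : E →₀ ℤ) :
    ⟪y, linearCombination ℤ id d⟫ = d.sum fun a n => (n : ℝ) * ⟪y, a⟫ := by
  simp only [linearCombination_apply, Finsupp.sum, inner_sum, id, ← Int.cast_smul_eq_zsmul ℝ,
    real_inner_smul_right]

/-- Split `x = x₊ + x₋` into its positive and nonpositive parts: obtuseness gives
`⟪x₋, x₊⟫ ≥ 0`, hence `⟪x, x₊⟫ ≥ ‖x₊‖² > 0`. -/
lemma exists_pos_coeff_inner_pos {S : Set E} (hind : LinearIndepOn ℤ id S)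
    (hobt : ∀ a ∈ S, ∀ b ∈ S, a ≠ b → ⟪a, b⟫ ≤ 0) {c : E →₀ ℤ} (hc : c ∈ supported ℤ ℤ S)
    (hpos : ¬ c ≤ 0) : ∃ α, 0 < c α ∧ 0 < ⟪linearCombination ℤ id c, α⟫ := by
  set p := c.filter (fun a => 0 < c a) with hp_def
  set q := c.filter (fun a => ¬ 0 < c a) with hq_def
  have hpq : p + q = c := c.filter_add_filter_not _
  have mem_p : ∀ {a}, a ∈ p.support → 0 < c a ∧ p a = c a := by
    intro a ha
    simp only [hp_def, Finsupp.support_filter, Finset.mem_filter, Finsupp.filter_apply] at ha ⊢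
    simp [ha.2]
  have mem_q : ∀ {b}, b ∈ q.support → c b < 0 ∧ q b = c b := by
    intro b hb
    simp only [hq_def, Finsupp.support_filter, Finset.mem_filter, Finsupp.filter_apply,
      Finsupp.mem_support_iff] at hb ⊢
    exact ⟨by omega, by simp [hb.2]⟩
  have hcS : ∀ {a}, a ∈ c.support → a ∈ S := fun ha => (mem_supported ℤ c).1 hc ha
  have hp0 : linearCombination ℤ id p ≠ 0 := by
    obtain ⟨a, ha⟩ : ∃ a, 0 < c a := by simpa [Finsupp.le_def] using hpos
    intro h
    have hpS : p ∈ supported ℤ ℤ S := (mem_supported ℤ p).2 fun b hb =>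
      hcS (Finsupp.mem_support_iff.2 (mem_p hb).1.ne')
    have := congrArg (· a) (linearIndepOn_iff.1 hind p hpS h)
    simp [hp_def, ha] at this
    omega
  have hcross : 0 ≤ ⟪linearCombination ℤ id q, linearCombination ℤ id p⟫ := by
    rw [real_inner_linearCombination_int]
    refine Finset.sum_nonneg fun a ha => mul_nonneg
      (by rw [(mem_p ha).2]; exact_mod_cast (mem_p ha).1.le) ?_
    rw [real_inner_comm, real_inner_linearCombination_int]
    refine Finset.sum_nonneg fun b hb => mul_nonneg_of_nonpos_of_nonpos
      (by rw [(mem_q hb).2]; exact_mod_cast (mem_q hb).1.le) ?_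
    refine hobt a (hcS (Finsupp.mem_support_iff.2 (mem_p ha).1.ne'))
      b (hcS (Finsupp.mem_support_iff.2 (mem_q hb).1.ne)) ?_
    rintro rfl
    exact absurd (mem_p ha).1 (mem_q hb).1.not_gt
  have hxp : 0 < ⟪linearCombination ℤ id c, linearCombination ℤ id p⟫ := by
    rw [← hpq, map_add, inner_add_left]
    have := real_inner_self_pos.2 hp0
    linarith
  rw [real_inner_linearCombination_int] at hxp
  obtain ⟨a, ha, hpa⟩ := Finset.exists_lt_of_sum_lt (f := fun _ => (0 : ℝ))
    (g := fun a => (p a : ℝ) * ⟪linearCombination ℤ id c, a⟫) (by rwa [Finset.sum_const_zero])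
  obtain ⟨hca, hpa_eq⟩ := mem_p ha
  rw [hpa_eq] at hpa
  exact ⟨a, hca, pos_of_mul_pos_right hpa (by exact_mod_cast hca.le)⟩

end Coefficients

section SignCoherence

variable {E : Type*} [NormedAddCommGroup E] [InnerProductSpace ℝ E] {R Sg : Set E}

lemma Finsupp.eq_single_sub_single_of_le {ι : Type*} [DecidableEq ι] {c : ι →₀ ℤ} {α β : ι}
    (hα : 0 < c α) (hcα : c ≤ single α 1) (hβ : 0 < (-c) β) (hcβ : -c ≤ single β 1) :
    c = single α 1 - single β 1 := by
  have hαβ : α ≠ β := by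
    rintro rfl
    simp only [Finsupp.coe_neg, Pi.neg_apply] at hβ
    omega
  ext a
  have h1 := Finsupp.le_def.1 hcα a
  have h2 := Finsupp.le_def.1 hcβ a
  simp only [Finsupp.coe_neg, Pi.neg_apply, Finsupp.coe_sub, Pi.sub_apply,
    Finsupp.single_apply] at h1 h2 hβ ⊢
  split_ifs at h1 h2 ⊢ with h h' <;> subst_vars <;> omega

lemma IsPiSys.linearIndepOn_int (hSg : IsPiSys R Sg) : LinearIndepOn ℤ id Sg :=
  hSg.2.1.restrict_scalars' ℤ

lemma IsPiSys.le_single_of_mixed (hR : IsRootSystem R) (hSg : IsPiSys R Sg)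
    {c : E →₀ ℤ} (hc : c ∈ supported ℤ ℤ Sg) (hx : linearCombination ℤ id c ∈ R)
    (hnn : ¬ 0 ≤ c) (hnp : ¬ c ≤ 0)
    (ih : ∀ c' ∈ supported ℤ ℤ Sg, linearCombination ℤ id c' ∈ R →
      (c'.sum fun _ n => n.natAbs) < (c.sum fun _ n => n.natAbs) → 0 ≤ c' ∨ c' ≤ 0) :
    ∃ α, 0 < c α ∧ c ≤ single α 1 := by
  classical
  obtain ⟨α, hcα, hxα⟩ := exists_pos_coeff_inner_pos hSg.linearIndepOn_int
    (hSg.inner_nonpos hR) hc hnp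
  have hαSg : α ∈ Sg := (mem_supported ℤ c).1 hc (Finsupp.mem_support_iff.2 hcα.ne')
  have hsingle : single α 1 ∈ supported ℤ ℤ Sg := single_mem_supported ℤ 1 hαSg
  have hne : linearCombination ℤ id c ≠ α := by
    intro h
    have hc_eq : c = single α 1 := by
      rw [← sub_eq_zero]
      refine linearIndepOn_iff.1 hSg.linearIndepOn_int _ (sub_mem hc hsingle) ?_
      simp [h]
    exact hnn (hc_eq ▸ Finsupp.single_nonneg.2 zero_le_one)
  have hx' : linearCombination ℤ id (c - single α 1) ∈ R := by
    simpa using hR.sub_mem_of_inner_pos hx (hSg.1 hαSg) hxα hne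
  refine ⟨α, hcα, ?_⟩
  rcases ih _ (sub_mem hc hsingle) hx' (Finsupp.sum_natAbs_sub_single_lt hcα) with h | h
  · have := add_nonneg h (Finsupp.single_nonneg.2 zero_le_one : 0 ≤ single α (1 : ℤ))
    exact absurd (by rwa [sub_add_cancel] at this) hnn
  · exact sub_nonpos.1 h

lemma IsPiSys.nonneg_or_nonpos (hR : IsRootSystem R) (hSg : IsPiSys R Sg)
    {c : E →₀ ℤ} (hc : c ∈ supported ℤ ℤ Sg) (hx : linearCombination ℤ id c ∈ R) :
    0 ≤ c ∨ c ≤ 0 := by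
  classical
  induction h : c.sum (fun _ n => n.natAbs) using Nat.strong_induction_on generalizing c with
  | _ N ih =>
  by_contra hmix
  rw [not_or] at hmix
  have ih' : ∀ c' ∈ supported ℤ ℤ Sg, linearCombination ℤ id c' ∈ R →
      (c'.sum fun _ n => n.natAbs) < (c.sum fun _ n => n.natAbs) → 0 ≤ c' ∨ c' ≤ 0 :=
    fun c' hc' hx' hlt => ih _ (h ▸ hlt) hc' hx' rfl
  obtain ⟨α, hα, hcα⟩ := hSg.le_single_of_mixed hR hc hx hmix.1 hmix.2 ih'
  obtain ⟨β, hβ, hcβ⟩ := hSg.le_single_of_mixed hR (neg_mem hc)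
    (by simpa using hR.neg_mem hx) (by simpa using hmix.2) (by simpa using hmix.1)
    (by rwa [Finsupp.sum_natAbs_neg])
  have hc_eq := Finsupp.eq_single_sub_single_of_le hα hcα hβ hcβ
  have hmem : ∀ {a}, c a ≠ 0 → a ∈ Sg := fun ha =>
    (mem_supported ℤ c).1 hc (Finsupp.mem_support_iff.2 ha)
  refine hSg.2.2 α (hmem hα.ne') β (hmem (by simpa using hβ.ne')) ?_
  simpa [hc_eq] using hx

end SignCoherence

theorem piSystem_is_base_of_subSystem_general
    {E : Type*} [NormedAddCommGroup E] [InnerProductSpace ℝ E]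
    (R : Set E) (hR : IsRootSystem R)
    (Sg : Set E) (hSg : IsPiSys R Sg) :
    (∀ α ∈ Sg, ∀ β ∈ Sg, α ≠ β → ⟪α, β⟫ ≤ 0) ∧
    IsRootSystem (subSystem Sg) ∧
    subSystem Sg ⊆ R ∧
    subSystem Sg ⊆ (Submodule.span ℝ Sg : Set E) ∧
    IsBase (subSystem Sg) Sg := by
  have hsub := hR.subSystem_subset_inter_span hSg.1
  refine ⟨hSg.inner_nonpos hR, isRootSystem_subSystem hR hSg.1, fun x hx => (hsub hx).1,
    fun x hx => Submodule.span_le_restrictScalars ℤ ℝ Sg (hsub hx).2,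
    subset_subSystem Sg, hSg.2.1, fun β hβ => ?_⟩
  obtain ⟨c, hc, rfl⟩ := (mem_span_image_iff_linearCombination ℤ (v := id)).1
    (by rw [Set.image_id]; exact (hsub hβ).2)
  refine ⟨c, (mem_supported ℤ c).1 hc, ?_, ?_⟩
  · simp [linearCombination_apply, Int.cast_smul_eq_zsmul]
  · simpa only [Finsupp.le_def, Finsupp.coe_zero, Pi.zero_apply] using
      hSg.nonneg_or_nonpos hR hc (hsub hβ).1

/-- If `Sg` is a Π-system of `R`, then distinct elements of `Sg` have nonpositive
inner products, and `Sg` is a base of the root subsystem `R(Sg)` (all images of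
`Sg` under the group generated by the reflections in elements of `Sg`): `R(Sg)`
is a reduced crystallographic root system contained in `R`, lying in the span of
`Sg`, and every element of `R(Sg)` is an integer linear combination of elements
of `Sg` with coefficients all nonnegative or all nonpositive. -/
theorem piSystem_is_base_of_subSystem
    {E : Type*} [NormedAddCommGroup E] [InnerProductSpace ℝ E] [FiniteDimensional ℝ E]
    (R : Set E) (hR : IsRootSystem R)
    (Sg : Set E) (hSg : IsPiSys R Sg) :
    (∀ α ∈ Sg, ∀ β ∈ Sg, α ≠ β → ⟪α, β⟫ ≤ 0) ∧
    IsRootSystem (subSystem Sg) ∧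
    subSystem Sg ⊆ R ∧
    subSystem Sg ⊆ (Submodule.span ℝ Sg : Set E) ∧
    IsBase (subSystem Sg) Sg :=
  piSystem_is_base_of_subSystem_general R hR Sg hSg
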